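/- arXiv:2009.06879 — 4 statements merged into one kernel-verified Lean document; each statement's English description precedes it below -/
import Mathlib

section
/- Let T be a triangle with vertices w, u, v and let Q be a finite set of points in the interior of T. Then there exists a convex chain w = q₀, q₁, ..., q_k, q_{k+1} = v with each qᵢ ∈ Q for 1 ≤ i ≤ k, such that the region bounded by segments wu, uv, and the chain contains no point of Q in its interior. -/
/-!
The chain is the list of vertices of `conv (Q ∪ {w, v})`, from `w` to `v`. By finite
Krein–Milman these vertices span the whole hull, so every point of `Q` lies in the hull of the
chain and hence outside the region cut off by it. When `Q` is nonempty the triangle is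
nondegenerate, so `w` and `v` are extreme points of the triangle; lying in the smaller hull
`conv (Q ∪ {w, v})`, they are extreme points of it as well.
-/

open Set Module

section Extreme

variable {𝕜 E : Type*} [Field 𝕜] [LinearOrder 𝕜] [AddCommGroup E] [Module 𝕜 E]

theorem mem_extremePoints_convexHull_of_subset_convexHull {s t : Set E} {x : E}
    (hst : s ⊆ convexHull 𝕜 t) (hxs : x ∈ s) (hx : x ∈ (convexHull 𝕜 t).extremePoints 𝕜) :
    x ∈ (convexHull 𝕜 s).extremePoints 𝕜 :=
  inter_extremePoints_subset_extremePoints_of_subset (convexHull_min hst (convex_convexHull 𝕜 t))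
    ⟨subset_convexHull 𝕜 s hxs, hx⟩

variable [IsStrictOrderedRing 𝕜]

theorem mem_extremePoints_convexHull_insert {s : Set E} {x : E} (hx : x ∉ convexHull 𝕜 s) :
    x ∈ (convexHull 𝕜 (insert x s)).extremePoints 𝕜 := by
  rcases s.eq_empty_or_nonempty with rfl | hs
  · simp [extremePoints_singleton]
  rw [convexHull_insert hs, mem_extremePoints_iff_left]
  obtain ⟨k, hk⟩ := hs.convexHull (𝕜 := 𝕜)
  refine ⟨mem_convexJoin.2 ⟨x, rfl, k, hk, left_mem_segment 𝕜 x k⟩, ?_⟩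
  intro x₁ hx₁ x₂ hx₂ ⟨a, b, ha, hb, hab, hcomb⟩
  simp only [mem_convexJoin, mem_singleton_iff, exists_eq_left] at hx₁ hx₂
  obtain ⟨k₁, hk₁, a₁, b₁, -, hb₁, hab₁, rfl⟩ := hx₁
  obtain ⟨k₂, hk₂, a₂, b₂, -, hb₂, hab₂, rfl⟩ := hx₂
  obtain rfl : a₁ = 1 - b₁ := eq_sub_of_add_eq hab₁
  obtain rfl : a₂ = 1 - b₂ := eq_sub_of_add_eq hab₂
  -- `t • x` is a combination of `k₁, k₂ ∈ conv s` of total weight `t`, so `t > 0` is impossible.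
  set t := a * b₁ + b * b₂
  have ht_smul : t • x = (a * b₁) • k₁ + (b * b₂) • k₂ := by
    linear_combination (norm := module) hab • x - hcomb
  rcases (show 0 ≤ t by positivity).eq_or_lt with ht | ht
  · have hb₁0 : b₁ = 0 := by nlinarith
    simp [hb₁0]
  · refine absurd ?_ hx
    have hx_combo : (a * b₁ / t) • k₁ + (b * b₂ / t) • k₂ = x := by
      rw [div_eq_inv_mul, div_eq_inv_mul, mul_smul t⁻¹, mul_smul t⁻¹, ← smul_add, ← ht_smul,
        smul_smul, inv_mul_cancel₀ ht.ne', one_smul]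
    rw [← hx_combo]
    exact convex_convexHull 𝕜 s hk₁ hk₂ (by positivity) (by positivity)
      (by rw [← add_div, div_self ht.ne'])

theorem left_mem_extremePoints_convexHull_pair (x y : E) :
    x ∈ (convexHull 𝕜 {x, y}).extremePoints 𝕜 := by
  rcases eq_or_ne x y with rfl | hxy
  · simp [extremePoints_singleton]
  · exact mem_extremePoints_convexHull_insert (by simpa using hxy)

theorem notMem_convexHull_sdiff_of_mem_extremePoints {s : Set E} {x : E}
    (hx : x ∈ (convexHull 𝕜 s).extremePoints 𝕜) : x ∉ convexHull 𝕜 (s \ {x}) := fun hmem ↦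
  (((convex_convexHull 𝕜 s).mem_extremePoints_iff_mem_sdiff_convexHull_sdiff.1 hx).2
    (convexHull_mono (sdiff_subset_sdiff_left (subset_convexHull 𝕜 s)) hmem))

end Extreme

section Normed

variable {E : Type*} [NormedAddCommGroup E] [NormedSpace ℝ E]

theorem Set.Finite.convexHull_extremePoints_convexHull {s : Set E} (hs : s.Finite) :
    convexHull ℝ ((convexHull ℝ s).extremePoints ℝ) = convexHull ℝ s := by
  have hfin : ((convexHull ℝ s).extremePoints ℝ).Finite :=
    hs.subset extremePoints_convexHull_subset
  simpa only [(hfin.isCompact_convexHull ℝ).isClosed.closure_eq] using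
    closure_convexHull_extremePoints (hs.isCompact_convexHull ℝ) (convex_convexHull ℝ s)

variable [FiniteDimensional ℝ E]

theorem mem_extremePoints_convexHull_triple_of_interior_nonempty (hE : 2 ≤ finrank ℝ E)
    {a b c : E} (h : (interior (convexHull ℝ {a, b, c})).Nonempty) :
    a ∈ (convexHull ℝ {a, b, c}).extremePoints ℝ := by
  refine mem_extremePoints_convexHull_insert fun ha ↦ ?_
  have hcol : Collinear ℝ {a, b, c} :=
    (collinear_insert_iff_of_mem_affineSpan (convexHull_subset_affineSpan _ ha)).2
      (collinear_pair ℝ b c)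
  have htop : vectorSpan ℝ {a, b, c} = ⊤ := by
    rw [← direction_affineSpan, ← affineSpan_convexHull,
      (convex_convexHull ℝ _).interior_nonempty_iff_affineSpan_eq_top.1 h,
      AffineSubspace.direction_top]
  have hle := hcol.finrank_le_one
  rw [htop, finrank_top] at hle
  omega

theorem mem_extremePoints_convexHull_insert_insert_of_subset_interior (hE : 2 ≤ finrank ℝ E)
    {w u v : E} {Q : Set E} (hQ : Q ⊆ interior (convexHull ℝ {w, u, v})) :
    w ∈ (convexHull ℝ (insert w (insert v Q))).extremePoints ℝ ∧
      v ∈ (convexHull ℝ (insert w (insert v Q))).extremePoints ℝ := by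
  rcases Q.eq_empty_or_nonempty with rfl | ⟨q, hq⟩
  · rw [LawfulSingleton.insert_empty_eq]
    exact ⟨left_mem_extremePoints_convexHull_pair w v,
      pair_comm v w ▸ left_mem_extremePoints_convexHull_pair v w⟩
  have hT : (interior (convexHull ℝ {w, u, v})).Nonempty := ⟨q, hQ hq⟩
  have hsub : insert w (insert v Q) ⊆ convexHull ℝ {w, u, v} := by
    rintro x (rfl | rfl | hx)
    exacts [subset_convexHull ℝ _ (by simp), subset_convexHull ℝ _ (by simp),
      interior_subset (hQ hx)]
  refine ⟨mem_extremePoints_convexHull_of_subset_convexHull hsub (by simp)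
    (mem_extremePoints_convexHull_triple_of_interior_nonempty hE hT), ?_⟩
  rw [show ({w, u, v} : Set E) = {v, w, u} by grind] at hT hsub
  exact mem_extremePoints_convexHull_of_subset_convexHull hsub (by simp)
    (mem_extremePoints_convexHull_triple_of_interior_nonempty hE hT)

end Normed

theorem Set.Finite.exists_tuple_from_to {α : Type*} {s : Set α} (hs : s.Finite) (a b : α) :
    ∃ (k : ℕ) (c : Fin (k + 2) → α), c 0 = a ∧ c (Fin.last (k + 1)) = b ∧
      (∀ i, i ≠ 0 → i ≠ Fin.last (k + 1) → c i ∈ s) ∧ range c = insert a (insert b s) := by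
  set l := hs.toFinset.toList
  refine ⟨l.length, Fin.cons a (Fin.snoc l.get b), rfl, by simp, ?_, by simp [Fin.range_snoc, l]⟩
  intro i h0 hl
  obtain ⟨j, rfl⟩ := Fin.exists_succ_eq.2 h0
  obtain ⟨m, rfl⟩ := (Fin.exists_castSucc_eq (i := j)).2 fun h ↦ hl (h ▸ Fin.succ_last _)
  simpa [l] using hs.mem_toFinset.1 (Finset.mem_toList.1 (List.getElem_mem m.isLt))

/-- given a triangle `w u v` and a finite set `Q` of points in its
interior, there is a convex chain `w = q₀, q₁, …, q_k, q_{k+1} = v` with the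
interior chain points in `Q`, such that the region bounded by the segments
`wu`, `uv` and the chain (the triangle minus the convex hull of the chain)
contains no point of `Q` in its interior. -/
theorem stmt4 (w u v : ℂ) (Q : Finset ℂ)
    (hQ : ∀ q ∈ Q, q ∈ interior (convexHull ℝ ({w, u, v} : Set ℂ))) :
    ∃ (k : ℕ) (c : Fin (k + 2) → ℂ),
      c 0 = w ∧ c (Fin.last (k + 1)) = v ∧
      (∀ i : Fin (k + 2), i ≠ 0 → i ≠ Fin.last (k + 1) → c i ∈ Q) ∧
      -- the chain is convex: every chain point is a vertex (extreme point) of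
      -- the convex hull of `Q ∪ {w, v}`, and the chain carries that hull
      (∀ i : Fin (k + 2),
        c i ∉ convexHull ℝ ((insert w (insert v (Q : Set ℂ))) \ {c i})) ∧
      (Q : Set ℂ) ⊆ convexHull ℝ (Set.range c) ∧
      -- the region bounded by `wu`, `uv` and the chain is empty of `Q`
      (∀ q ∈ Q,
        q ∉ interior
          (convexHull ℝ ({w, u, v} : Set ℂ) \ convexHull ℝ (Set.range c))) := by
  set S : Set ℂ := insert w (insert v Q)
  set F := (convexHull ℝ S).extremePoints ℝ
  have hS : S.Finite := (Q.finite_toSet.insert v).insert w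
  have hwv : w ∈ F ∧ v ∈ F :=
    mem_extremePoints_convexHull_insert_insert_of_subset_interior
      Complex.finrank_real_complex.ge hQ
  obtain ⟨k, c, hc0, hcl, hmid, hrange⟩ :=
    (Q.finite_toSet.inter_of_left F).exists_tuple_from_to w v
  have hrangeF : range c = F := by
    rw [hrange]
    ext x
    have hxS : x ∈ F → x ∈ S := fun hx ↦ extremePoints_convexHull_subset hx
    simp only [S, mem_insert_iff, mem_inter_iff, Finset.mem_coe] at hxS ⊢
    grind
  have hQhull : (Q : Set ℂ) ⊆ convexHull ℝ (range c) := by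
    rw [hrangeF, hS.convexHull_extremePoints_convexHull]
    exact (subset_insert _ _).trans ((subset_insert _ _).trans (subset_convexHull ℝ S))
  refine ⟨k, c, hc0, hcl, fun i h0 hl ↦ (hmid i h0 hl).1, fun i ↦ ?_, hQhull,
    fun q hq hmem ↦ (interior_subset hmem).2 (hQhull hq)⟩
  exact notMem_convexHull_sdiff_of_mem_extremePoints (hrangeF.subset (mem_range_self i))
end

section
/- Let u be the apex of a cone C of angle π/3 with boundary rays r₁ and r₂, and let v be a point in the interior of C. Let the canonical triangle ∇ᵤᵛ be the equilateral triangle bounded by r₁, r₂, and the line through v perpendicular to the bisector of C, with corners u, a, b where a ∈ r₁ and b ∈ r₂. Then triangle ∇ᵤᵛ is equilateral, and |ua| + |av| ≤ 2·|uv| and |ub| + |bv| ≤ 2·|uv|. -/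
open Real EuclideanGeometry

lemma stmt7_aux (u a b v : ℂ) (hr : 0 < dist u a) (hab : dist a b = dist u a)
    (hub : dist u b = dist u a) (t : ℝ) (ht0 : 0 ≤ t) (hv : v = a + t • (b - a)) :
    dist u a + dist a v ≤ 2 * dist u v := by
  set r := dist u a with hrdef
  have hav : dist a v = t * r := by
    rw [dist_comm, dist_eq_norm, hv]
    simp [norm_smul, abs_of_nonneg ht0, ← dist_eq_norm, dist_comm b a, hab]
  rcases eq_or_lt_of_le ht0 with ht | ht
  · have hva : v = a := by simp [hv, ← ht]
    rw [hva, dist_comm a a, dist_self]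
    linarith
  · -- cos of angle at a is 1/2
    have hc : Real.cos (EuclideanGeometry.angle u a b) = 1 / 2 := by
      have h1 := EuclideanGeometry.law_cos u a b
      rw [hub, dist_comm b a, hab, ← hrdef] at h1
      have : r * r * (2 * Real.cos (EuclideanGeometry.angle u a b)) = r * r * 1 := by ring_nf; nlinarith [h1]
      have h2 := mul_left_cancel₀ (by positivity : r * r ≠ 0) this
      linarith
    have hang : EuclideanGeometry.angle u a v = EuclideanGeometry.angle u a b := by
      simp only [EuclideanGeometry.angle, vsub_eq_sub]
      have : v - a = t • (b - a) := by rw [hv]; ring_nf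
      rw [this, InnerProductGeometry.angle_smul_right_of_pos _ _ ht]
    have h3 := EuclideanGeometry.law_cos u a v
    rw [hang, hc, dist_comm v a, hav, ← hrdef] at h3
    nlinarith [sq_nonneg (r - t * r), dist_nonneg (x := u) (y := v), sq_nonneg (r * (t - 1))]


/-- `u` is the apex of a cone of angle `π/3` with `a`, `b` on its two
boundary rays at equal distance from `u` (so that `ab` is perpendicular to the
bisector), and `v` lies on the segment `ab` (`v` in the cone).  Then the canonical
triangle `u a b` is equilateral and `|ua| + |av| ≤ 2|uv|` and `|ub| + |bv| ≤ 2|uv|`. -/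
theorem stmt7 (u a b v : ℂ)
    (hab : a ≠ b) (huv : v ≠ u)
    (hiso : dist u a = dist u b)
    (hangle : EuclideanGeometry.angle a u b = π / 3)
    (hv : v ∈ segment ℝ a b) :
    dist u a = dist a b ∧ dist u b = dist a b ∧
    dist u a + dist a v ≤ 2 * dist u v ∧
    dist u b + dist b v ≤ 2 * dist u v := by
  have hr : 0 < dist u a := by
    rcases eq_or_lt_of_le (dist_nonneg (x := u) (y := a)) with h | h
    · exfalso
      have ha : u = a := by rwa [eq_comm, dist_eq_zero] at h
      have hb : u = b := by rw [← dist_eq_zero, hiso.symm, ← h]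
      exact hab (ha ▸ hb ▸ rfl)
    · exact h
  have heq : dist a b = dist u a := by
    have h1 := EuclideanGeometry.law_cos a u b
    rw [hangle, Real.cos_pi_div_three, dist_comm a u, dist_comm b u, ← hiso] at h1
    have h2 : dist a b * dist a b = dist u a * dist u a := by linarith
    nlinarith [dist_nonneg (x := a) (y := b)]
  obtain ⟨s, t, hs, ht, hst, hvst⟩ := hv
  have hva : v = a + t • (b - a) := by
    rw [← hvst, smul_sub]
    have : s = 1 - t := by linarith
    rw [this]
    module
  have hvb : v = b + s • (a - b) := by
    rw [← hvst, smul_sub]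
    have : t = 1 - s := by linarith
    rw [this]
    module
  refine ⟨heq.symm, by rw [← hiso, heq], ?_, ?_⟩
  · exact stmt7_aux u a b v hr heq hiso.symm t ht hva
  · exact stmt7_aux u b a v (hiso ▸ hr) (by rw [dist_comm, heq, hiso]) (hiso ▸ rfl) s hs hvb
end

section
/- Let u be the apex of a cone of angle π/3 containing a point v, let a and b be the corners of the canonical (equilateral) triangle ∇ᵤᵛ opposite u, and let m be the midpoint of segment ab. Then max(|ua| + |av|, |ub| + |bv|) = (√3·cos∠muv + sin∠muv)·|uv|, where ∠muv is the angle between uv and the cone bisector um. -/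
/-!
Since `u` is equidistant from `a` and `b`, the line `um` is perpendicular to `ab`, so `u m v` is a
right triangle with the right angle at `m`: `cos ∠muv · |uv| = |um|` and `sin ∠muv · |uv| = |mv|`.
The apex angle `π/3` makes `uab` equilateral with side `s = |ua|`, whence `|um| = (√3/2) s` and the
right-hand side is `(3/2) s + |mv|`. On the left, `max(|av|, |bv|) = s/2 + |mv|` for `v` on `ab`.
-/

open Real EuclideanGeometry

namespace EuclideanGeometry

variable {V P : Type*} [NormedAddCommGroup V] [InnerProductSpace ℝ V] [MetricSpace P]
  [NormedAddTorsor V P]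

theorem angle_midpoint_eq_pi_div_two_of_dist_eq {u a b v : P} (hiso : dist u a = dist u b)
    (hv : v ∈ line[ℝ, a, b]) : ∠ u (midpoint ℝ a b) v = π / 2 := by
  have hperp : inner ℝ (midpoint ℝ a b -ᵥ u) (b -ᵥ a) = 0 :=
    inner_vsub_vsub_of_dist_eq_of_dist_eq (by rwa [dist_comm a, dist_comm b])
      (dist_left_midpoint_eq_dist_right_midpoint a b)
  have hm : midpoint ℝ a b ∈ line[ℝ, a, b] := by
    rw [← lineMap_one_half]
    exact AffineMap.lineMap_mem_affineSpan_pair _ _ _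
  obtain ⟨r, hr⟩ : ∃ r : ℝ, r • (a -ᵥ b) = v -ᵥ midpoint ℝ a b := by
    rw [← mem_vectorSpan_pair, ← direction_affineSpan]
    exact AffineSubspace.vsub_mem_direction hv hm
  rw [angle, ← InnerProductGeometry.inner_eq_zero_iff_angle_eq_pi_div_two, ← hr,
    inner_smul_right, ← neg_vsub_eq_vsub_rev (midpoint ℝ a b) u, ← neg_vsub_eq_vsub_rev b a,
    inner_neg_neg, hperp, mul_zero]

theorem dist_eq_of_angle_eq_pi_div_three {u a b : P} (hiso : dist u a = dist u b)
    (hangle : ∠ a u b = π / 3) : dist a b = dist u a := by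
  have hcos := law_cos a u b
  rw [hangle, cos_pi_div_three, dist_comm a u, dist_comm b u, ← hiso] at hcos
  have hsq : dist a b ^ 2 = dist u a ^ 2 := by linear_combination hcos
  exact (pow_left_inj₀ dist_nonneg dist_nonneg two_ne_zero).1 hsq

theorem dist_midpoint_of_angle_eq_pi_div_three {u a b : P} (hiso : dist u a = dist u b)
    (hangle : ∠ a u b = π / 3) : dist u (midpoint ℝ a b) = √3 / 2 * dist u a := by
  have hright : ∠ u (midpoint ℝ a b) a = π / 2 :=
    angle_midpoint_eq_pi_div_two_of_dist_eq hiso (left_mem_affineSpan_pair ℝ a b)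
  have hpyth := (dist_sq_eq_dist_sq_add_dist_sq_iff_angle_eq_pi_div_two _ _ _).2 hright
  rw [dist_left_midpoint, dist_eq_of_angle_eq_pi_div_three hiso hangle] at hpyth
  have h3 : √3 * √3 = 3 := mul_self_sqrt (by norm_num)
  have hsq : dist u (midpoint ℝ a b) ^ 2 = (√3 / 2 * dist u a) ^ 2 := by
    norm_num at hpyth
    linear_combination -hpyth - dist u a ^ 2 / 4 * h3
  exact (pow_left_inj₀ dist_nonneg (by positivity) two_ne_zero).1 hsq

end EuclideanGeometry

theorem Wbtw.max_dist_eq_half_dist_add_dist_midpoint {V P : Type*} [NormedAddCommGroup V]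
    [NormedSpace ℝ V] [MetricSpace P] [NormedAddTorsor V P] {a v b : P} (h : Wbtw ℝ a v b) :
    max (dist a v) (dist b v) = dist a b / 2 + dist (midpoint ℝ a b) v := by
  obtain ⟨t, ⟨ht0, ht1⟩, rfl⟩ := h
  rw [dist_left_lineMap, dist_comm b, dist_lineMap_right, ← lineMap_one_half,
    dist_lineMap_lineMap, Real.dist_eq, Real.norm_eq_abs, Real.norm_eq_abs,
    abs_of_nonneg ht0, abs_of_nonneg (sub_nonneg.2 ht1)]
  rcases le_total t (1 / 2) with ht | ht
  · rw [abs_of_nonneg (by linarith), max_eq_right (by nlinarith [dist_nonneg (x := a) (y := b)])]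
    ring
  · rw [abs_of_nonpos (by linarith), max_eq_left (by nlinarith [dist_nonneg (x := a) (y := b)])]
    ring

theorem stmt8_general (u a b v m : ℂ)
    (hiso : dist u a = dist u b)
    (hangle : EuclideanGeometry.angle a u b = π / 3)
    (hv : v ∈ segment ℝ a b)
    (hm : m = midpoint ℝ a b) :
    max (dist u a + dist a v) (dist u b + dist b v) =
      (Real.sqrt 3 * Real.cos (EuclideanGeometry.angle m u v) +
        Real.sin (EuclideanGeometry.angle m u v)) * dist u v := by
  have hbtw : Wbtw ℝ a v b := mem_segment_iff_wbtw.1 hv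
  have hright : ∠ v m u = π / 2 := by
    rw [angle_comm, hm]
    exact angle_midpoint_eq_pi_div_two_of_dist_eq hiso hbtw.mem_affineSpan
  have hcos := cos_angle_mul_dist_of_angle_eq_pi_div_two hright
  have hsin := sin_angle_mul_dist_of_angle_eq_pi_div_two hright
  have hum : dist u m = √3 / 2 * dist u a := by
    rw [hm]; exact dist_midpoint_of_angle_eq_pi_div_three hiso hangle
  have hmax : max (dist u a + dist a v) (dist u b + dist b v) = 3 / 2 * dist u a + dist m v := by
    rw [← hiso, max_add_add_left, hbtw.max_dist_eq_half_dist_add_dist_midpoint, dist_eq_of_angle_eq_pi_div_three hiso hangle,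
      ← hm]
    ring
  have h3 : √3 * √3 = 3 := mul_self_sqrt (by norm_num)
  calc max (dist u a + dist a v) (dist u b + dist b v)
      = 3 / 2 * dist u a + dist m v := hmax
    _ = √3 * dist u m + dist v m := by
      rw [hum, dist_comm v m]; linear_combination (-dist u a / 2) * h3
    _ = _ := by rw [← hcos, ← hsin, dist_comm v u]; ring

/-- with `u a b` the canonical equilateral triangle (apex angle `π/3`
at `u`, `v` on the segment `ab`) and `m` the midpoint of `ab`,
`max(|ua|+|av|, |ub|+|bv|) = (√3·cos ∠muv + sin ∠muv)·|uv|`. -/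
theorem stmt8 (u a b v m : ℂ)
    (hab : a ≠ b) (huv : v ≠ u)
    (hiso : dist u a = dist u b)
    (hangle : EuclideanGeometry.angle a u b = π / 3)
    (hv : v ∈ segment ℝ a b)
    (hm : m = midpoint ℝ a b) :
    max (dist u a + dist a v) (dist u b + dist b v) =
      (Real.sqrt 3 * Real.cos (EuclideanGeometry.angle m u v) +
        Real.sin (EuclideanGeometry.angle m u v)) * dist u v :=
  stmt8_general u a b v m hiso hangle hv hm
end

section
/- Let u be a point, and let v₀, v₁, ..., v_k be points in a cone C̄₀ᵘ of angle π/3 at u, appearing in counterclockwise angular order around u, such that for each i the segment u·vᵢ makes angle at most π/3 with each cone boundary. Let c be the intersection of the left cone boundary ray with the horizontal line through v_k. Suppose each consecutive pair vᵢ₋₁, vᵢ is connected by a segment whose direction lies within the cone directions (each segment vᵢ₋₁vᵢ lies in a cone of angle π/3 translated to vᵢ₋₁ or vᵢ). Then the total length |uv₀| + Σᵢ |vᵢ₋₁vᵢ| is at most |uc| + 2·|c v_k|. -/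
/-!
The linear functional `L z = 2 Re z + (4/√3) Im z` is the one with `L 1 = 2` and
`L (exp (2πi/3)) = 1`; it dominates the norm on every direction of argument in `[π/3, 2π/3]`.
Bounding each segment of the chain by `L` and telescoping gives
`length ≤ L (v_k - u) = L (c - u) + L (v_k - c) = |uc| + 2 Re (v_k - c) ≤ |uc| + 2 |c v_k|`.
-/

open Real

theorem Fin.sum_succ_sub_castSucc {G : Type*} [AddCommGroup G] :
    ∀ {k : ℕ} (v : Fin (k + 1) → G),
      ∑ i : Fin k, (v i.succ - v i.castSucc) = v (Fin.last k) - v 0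
  | 0, v => by simp
  | k + 1, v => by
    rw [Fin.sum_univ_castSucc]
    simp only [Fin.succ_castSucc]
    rw [Fin.sum_succ_sub_castSucc (fun i => v i.castSucc), Fin.succ_last]
    simp only [Fin.castSucc_zero]
    abel

theorem chain_length_le {E : Type*} [NormedAddCommGroup E] [Module ℝ E] (L : E →ₗ[ℝ] ℝ)
    {k : ℕ} (u : E) (v : Fin (k + 1) → E) (h₀ : ‖v 0 - u‖ ≤ L (v 0 - u))
    (h : ∀ i : Fin k, ‖v i.succ - v i.castSucc‖ ≤ L (v i.succ - v i.castSucc)) :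
    ‖v 0 - u‖ + ∑ i : Fin k, ‖v i.succ - v i.castSucc‖ ≤ L (v (Fin.last k) - u) :=
  calc ‖v 0 - u‖ + ∑ i : Fin k, ‖v i.succ - v i.castSucc‖
      ≤ L (v 0 - u) + ∑ i : Fin k, L (v i.succ - v i.castSucc) :=
        add_le_add h₀ (Finset.sum_le_sum fun i _ => h i)
    _ = L (v (Fin.last k) - u) := by
        rw [← map_sum, ← map_add, Fin.sum_succ_sub_castSucc, sub_add_sub_cancel']

namespace Real

theorem cos_two_pi_div_three : cos (2 * π / 3) = -(1 / 2) := by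
  rw [show 2 * π / 3 = π - π / 3 by ring, cos_pi_sub, cos_pi_div_three]

theorem sin_two_pi_div_three : sin (2 * π / 3) = √3 / 2 := by
  rw [show 2 * π / 3 = π - π / 3 by ring, sin_pi_sub, sin_pi_div_three]

end Real

noncomputable def coneFunctional : ℂ →ₗ[ℝ] ℝ :=
  (2 : ℝ) • Complex.reLm + (4 / √3) • Complex.imLm

theorem coneFunctional_apply (z : ℂ) : coneFunctional z = 2 * z.re + 4 / √3 * z.im := rfl

theorem norm_le_coneFunctional {z : ℂ} (hz : z.arg ∈ Set.Icc (π / 3) (2 * π / 3)) :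
    ‖z‖ ≤ coneFunctional z := by
  obtain ⟨h₁, h₂⟩ := hz
  have hcos_lower : -(1 / 2) ≤ cos z.arg := by
    rw [← cos_two_pi_div_three]
    exact cos_le_cos_of_nonneg_of_le_pi (by linarith [pi_pos]) (by linarith [pi_pos]) h₂
  have hcos_upper : cos z.arg ≤ 1 / 2 := by
    rw [← cos_pi_div_three]
    exact cos_le_cos_of_nonneg_of_le_pi (by linarith [pi_pos]) (by linarith [pi_pos]) h₁
  have hsin : √3 / 2 ≤ sin z.arg := by
    have hsin_nonneg : 0 ≤ sin z.arg :=
      sin_nonneg_of_nonneg_of_le_pi (by linarith [pi_pos]) (by linarith [pi_pos])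
    nlinarith [sin_sq z.arg, sq_sqrt (show (0 : ℝ) ≤ 3 by norm_num)]
  have hunit : 1 ≤ 2 * cos z.arg + 4 / √3 * sin z.arg := by
    have : 4 / √3 * (√3 / 2) = 2 := by field_simp; norm_num
    nlinarith [mul_le_mul_of_nonneg_left hsin (by positivity : (0 : ℝ) ≤ 4 / √3)]
  rw [coneFunctional_apply, ← Complex.norm_mul_cos_arg, ← Complex.norm_mul_sin_arg]
  nlinarith [norm_nonneg z]

theorem coneFunctional_ofReal_mul_exp {t : ℝ} (ht : 0 ≤ t) :
    coneFunctional (t * Complex.exp ((2 * π / 3 : ℂ) * Complex.I))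
      = ‖(t : ℂ) * Complex.exp ((2 * π / 3 : ℂ) * Complex.I)‖ := by
  rw [show (2 * π / 3 : ℂ) = ((2 * π / 3 : ℝ) : ℂ) by push_cast; rfl, norm_mul,
    Complex.norm_exp_ofReal_mul_I, Complex.norm_of_nonneg ht, coneFunctional_apply,
    Complex.re_ofReal_mul, Complex.im_ofReal_mul, Complex.exp_ofReal_mul_I_re,
    Complex.exp_ofReal_mul_I_im, cos_two_pi_div_three, sin_two_pi_div_three]
  field_simp
  ring

theorem coneFunctional_le_two_mul_norm {z : ℂ} (hz : z.im = 0) :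
    coneFunctional z ≤ 2 * ‖z‖ := by
  rw [coneFunctional_apply, hz, mul_zero, add_zero]
  exact mul_le_mul_of_nonneg_left (Complex.re_le_norm z) zero_le_two

/-- `u` is the apex of a `π/3` cone whose directions have argument in
`[π/3, 2π/3]` (left boundary direction `2π/3`).  The chain `u, v₀, v₁, …, v_k`
consists of segments whose directions all lie in the cone of directions, and `c` is
the point on the left boundary ray at the same height as `v_k`.  Then the total
length of the chain is at most `|uc| + 2·|c v_k|`. -/
theorem stmt10 (u c : ℂ) (k : ℕ) (v : Fin (k + 1) → ℂ)
    (hv0 : (v 0 - u).arg ∈ Set.Icc (π / 3) (2 * π / 3))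
    (hseg : ∀ i : Fin k, (v i.succ - v i.castSucc).arg ∈ Set.Icc (π / 3) (2 * π / 3))
    (hc : ∃ t : ℝ, 0 ≤ t ∧ c = u + (t : ℂ) * Complex.exp ((2 * π / 3 : ℂ) * Complex.I))
    (hcim : c.im = (v (Fin.last k)).im) :
    ‖v 0 - u‖ + ∑ i : Fin k, ‖v i.succ - v i.castSucc‖ ≤
      ‖c - u‖ + 2 * ‖v (Fin.last k) - c‖ := by
  obtain ⟨t, ht, hct⟩ := hc
  have hcu : coneFunctional (c - u) = ‖c - u‖ := by
    rw [hct, add_sub_cancel_left, coneFunctional_ofReal_mul_exp ht]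
  have hvc : (v (Fin.last k) - c).im = 0 := by rw [Complex.sub_im, hcim, sub_self]
  calc ‖v 0 - u‖ + ∑ i : Fin k, ‖v i.succ - v i.castSucc‖
      ≤ coneFunctional (v (Fin.last k) - u) :=
        chain_length_le coneFunctional u v (norm_le_coneFunctional hv0)
          fun i => norm_le_coneFunctional (hseg i)
    _ = coneFunctional (c - u) + coneFunctional (v (Fin.last k) - c) := by
        rw [← map_add, sub_add_sub_cancel']
    _ ≤ ‖c - u‖ + 2 * ‖v (Fin.last k) - c‖ :=
        add_le_add hcu.le (coneFunctional_le_two_mul_norm hvc)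
end
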